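/- arXiv:1906.07013 — 3 statements merged into one kernel-verified Lean document; each statement's English description precedes it below -/
import Mathlib

section
/- Let γ, α, L > 0 and let {β_n} be a sequence of positive reals with β_0 > 0 satisfying β_{n+1} ≥ β_n + γ·α·√(β_n)/L for all n ≥ 0. Then there exists a constant C > 0 such that β_n ≥ C·n² for all n > 0. -/
theorem stmt_6 (γ α L : ℝ) (hγ : 0 < γ) (hα : 0 < α) (hL : 0 < L)
    (β : ℕ → ℝ) (hβpos : ∀ n, 0 < β n)
    (hrec : ∀ n : ℕ, β n + γ * α * Real.sqrt (β n) / L ≤ β (n + 1)) :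
    ∃ C : ℝ, 0 < C ∧ ∀ n : ℕ, 0 < n → C * (n : ℝ) ^ 2 ≤ β n := by
  set k : ℝ := γ * α / L with hk
  have hkpos : 0 < k := by positivity
  set C : ℝ := min (k ^ 2 / 9) (β 1) with hC
  have hCpos : 0 < C := lt_min (by positivity) (hβpos 1)
  have hCk : C ≤ k ^ 2 / 9 := min_le_left _ _
  have hsqrtC : Real.sqrt C ≤ k / 3 := by
    rw [show k / 3 = Real.sqrt ((k/3)^2) from (Real.sqrt_sq (by positivity)).symm]
    exact Real.sqrt_le_sqrt (by nlinarith)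
  have h3C : 3 * C ≤ k * Real.sqrt C := by
    have hsC : Real.sqrt C * Real.sqrt C = C := Real.mul_self_sqrt hCpos.le
    nlinarith [Real.sqrt_nonneg C, hkpos]
  refine ⟨C, hCpos, ?_⟩
  intro n hn
  induction n, hn using Nat.le_induction with
  | base =>
    have h := min_le_right (k ^ 2 / 9) (β 1)
    norm_num
    exact h
  | succ n hn1 ih =>
    
    have hrec' : β n + k * Real.sqrt (β n) ≤ β (n + 1) := by
      have := hrec n
      rw [hk]; linarith [hrec n, (by ring : γ * α * Real.sqrt (β n) / L = γ * α / L * Real.sqrt (β n))]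
    have hn1' : (1 : ℝ) ≤ (n : ℝ) := by exact_mod_cast hn1
    have hsqrt : Real.sqrt (C * (n:ℝ)^2) ≤ Real.sqrt (β n) := Real.sqrt_le_sqrt ih
    have hsqeq : Real.sqrt (C * (n:ℝ)^2) = Real.sqrt C * n := by
      rw [Real.sqrt_mul hCpos.le, Real.sqrt_sq (by positivity)]
    have key : C * (2 * (n:ℝ) + 1) ≤ k * Real.sqrt (β n) := by
      have h1 : k * (Real.sqrt C * n) ≤ k * Real.sqrt (β n) := by
        rw [← hsqeq]; exact mul_le_mul_of_nonneg_left hsqrt hkpos.le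
      nlinarith [Real.sqrt_nonneg C]
    have : C * ((n:ℝ) + 1)^2 ≤ β n + k * Real.sqrt (β n) := by nlinarith
    push_cast
    linarith
end

section
/- Let g : X → ℝ be convex, λ_{n-1}, λ_n > 0, δ > 0, and suppose ⟨x_n - x_{n-1} + λ_{n-1} K*y_{n-1}, x - x_n⟩ ≥ λ_{n-1}(g(x_n) - g(x)) for all x ∈ X. Setting z_n = x_n + δ(x_n - x_{n-1}), it follows that ⟨(λ_n/(δλ_{n-1}))(z_n - x_n) + λ_n K*y_{n-1}, x_{n+1} - z_n⟩ ≥ λ_n( (1+δ)g(x_n) - g(x_{n+1}) - δ g(x_{n-1}) ). -/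
open scoped InnerProductSpace

theorem stmt_13 {X Y : Type*} [NormedAddCommGroup X] [InnerProductSpace ℝ X]
    [NormedAddCommGroup Y] [InnerProductSpace ℝ Y]
    (g : X → ℝ) (hg : ConvexOn ℝ Set.univ g)
    (Kstar : Y →ₗ[ℝ] X) (ynm1 : Y)
    (lamnm1 lamn δ : ℝ) (hlamnm1 : 0 < lamnm1) (hlamn : 0 < lamn) (hδ : 0 < δ)
    (xnm1 xn xnp1 : X)
    (hprox : ∀ x : X,
      ⟪xn - xnm1 + lamnm1 • Kstar ynm1, x - xn⟫_ℝ ≥ lamnm1 * (g xn - g x))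
    (zn : X) (hzn : zn = xn + δ • (xn - xnm1)) :
    ⟪(lamn / (δ * lamnm1)) • (zn - xn) + lamn • Kstar ynm1, xnp1 - zn⟫_ℝ ≥
      lamn * ((1 + δ) * g xn - g xnp1 - δ * g xnm1) := by
  set v := xn - xnm1 + lamnm1 • Kstar ynm1 with hv
  have h1 := hprox xnp1
  have h2 := hprox xnm1
  have hvec : (lamn / (δ * lamnm1)) • (zn - xn) + lamn • Kstar ynm1
      = (lamn / lamnm1) • v := by
    rw [hzn, hv]
    have hδ' : δ ≠ 0 := ne_of_gt hδ
    have hl' : lamnm1 ≠ 0 := ne_of_gt hlamnm1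
    rw [add_sub_cancel_left, smul_smul, smul_add, smul_smul]
    congr 1
    · congr 1
      field_simp
    · congr 1
      field_simp
  have hvec2 : xnp1 - zn = (xnp1 - xn) + δ • (xnm1 - xn) := by
    rw [hzn]
    rw [smul_sub, smul_sub]
    abel
  rw [hvec, hvec2, real_inner_smul_left, inner_add_right, real_inner_smul_right]
  have hc : 0 < lamn / lamnm1 := div_pos hlamn hlamnm1
  have hb : ⟪v, xnp1 - xn⟫_ℝ + δ * ⟪v, xnm1 - xn⟫_ℝ
      ≥ lamnm1 * ((1 + δ) * g xn - g xnp1 - δ * g xnm1) := by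
    nlinarith [mul_le_mul_of_nonneg_left h2 (le_of_lt hδ)]
  calc lamn / lamnm1 * (⟪v, xnp1 - xn⟫_ℝ + δ * ⟪v, xnm1 - xn⟫_ℝ)
      ≥ lamn / lamnm1 * (lamnm1 * ((1 + δ) * g xn - g xnp1 - δ * g xnm1)) := by
        exact mul_le_mul_of_nonneg_left hb (le_of_lt hc)
    _ = lamn * ((1 + δ) * g xn - g xnp1 - δ * g xnm1) := by
        field_simp
end

section
/- Let {σ_n} be a sequence of positive reals that is nonincreasing and bounded below by a positive constant, and {β_n} a sequence of positive reals with β_{n+1} = β_n(1 + γλ_{n+1}) where λ_n = σ_n/√(β_{n-1}) and γ > 0. If λ_n does not converge to 0, then β_n → +∞ and hence σ_n = √(β_{n-1})λ_n → +∞, a contradiction; therefore λ_n → 0 and consequently β_{n+1}/β_n → 1 and λ_{n+1}/λ_n → 1. -/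
open Filter Topology

theorem stmt_16 (γ : ℝ) (hγ : 0 < γ)
    (σ : ℕ → ℝ) (m : ℝ) (hm : 0 < m)
    (hσpos : ∀ n, 0 < σ n) (hσmono : ∀ n, σ (n + 1) ≤ σ n) (hσbd : ∀ n, m ≤ σ n)
    (β lam : ℕ → ℝ) (hβpos : ∀ n, 0 < β n)
    (hlam : ∀ n : ℕ, lam (n + 1) = σ (n + 1) / Real.sqrt (β n))
    (hβrec : ∀ n : ℕ, β (n + 1) = β n * (1 + γ * lam (n + 1))) :
    Tendsto lam atTop (𝓝 0) ∧
    Tendsto (fun n => β (n + 1) / β n) atTop (𝓝 1) ∧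
    Tendsto (fun n => lam (n + 1) / lam n) atTop (𝓝 1) := by
  have hsqrtpos : ∀ n, 0 < Real.sqrt (β n) := fun n => Real.sqrt_pos.mpr (hβpos n)
  have hlampos : ∀ n, 0 < lam (n + 1) := fun n => by
    rw [hlam n]; exact div_pos (hσpos _) (hsqrtpos n)
  have hβmono : Monotone β := by
    apply monotone_nat_of_le_succ
    intro n
    rw [hβrec n]
    nlinarith [hβpos n, hlampos n, mul_pos hγ (hlampos n)]
  set c := γ * m * Real.sqrt (β 0) with hc
  have hcpos : 0 < c := mul_pos (mul_pos hγ hm) (hsqrtpos 0)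
  have hstep : ∀ n, β n + c ≤ β (n + 1) := by
    intro n
    rw [hβrec n, hlam n]
    have h1 : β n * (1 + γ * (σ (n+1) / Real.sqrt (β n)))
        = β n + γ * σ (n+1) * (β n / Real.sqrt (β n)) := by ring
    rw [h1, Real.div_sqrt]
    have h2 : Real.sqrt (β 0) ≤ Real.sqrt (β n) :=
      Real.sqrt_le_sqrt (hβmono (Nat.zero_le n))
    have h3 : c ≤ γ * σ (n+1) * Real.sqrt (β n) := by
      rw [hc]
      gcongr
      · have := hσpos (n+1); positivity
      · exact hσbd (n+1)
    linarith
  have hlin : ∀ n, β 0 + n * c ≤ β n := by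
    intro n
    induction n with
    | zero => simp
    | succ k ih =>
      have := hstep k
      push_cast
      nlinarith
  have hβtop : Tendsto β atTop atTop := by
    apply tendsto_atTop_mono hlin
    exact tendsto_atTop_add_const_left _ _
      (Tendsto.atTop_mul_const hcpos tendsto_natCast_atTop_atTop)
  have hsqrttop : Tendsto (fun n => Real.sqrt (β n)) atTop atTop := by
    rw [tendsto_atTop_atTop]
    intro b
    obtain ⟨N, hN⟩ := tendsto_atTop_atTop.mp hβtop (b ^ 2 + 1)
    refine ⟨N, fun n hn => ?_⟩
    have h := hN n hn
    have hb : b ≤ Real.sqrt (b ^ 2 + 1) := by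
      nlinarith [Real.sq_sqrt (show (0:ℝ) ≤ b ^ 2 + 1 by positivity),
        Real.sqrt_nonneg (b ^ 2 + 1)]
    exact hb.trans (Real.sqrt_le_sqrt h)
  have hσtop : ∀ n, σ (n + 1) ≤ σ 0 := by
    intro n
    exact (antitone_nat_of_succ_le hσmono) (Nat.zero_le (n+1))
  have hlam1 : Tendsto (fun n => lam (n + 1)) atTop (𝓝 0) := by
    apply squeeze_zero (fun n => (hlampos n).le)
      (g := fun n => σ 0 * (Real.sqrt (β n))⁻¹)
    · intro n
      rw [hlam n, div_eq_mul_inv]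
      exact mul_le_mul_of_nonneg_right (hσtop n) (inv_nonneg.mpr (hsqrtpos n).le)
    · have : Tendsto (fun n => (Real.sqrt (β n))⁻¹) atTop (𝓝 0) :=
        tendsto_inv_atTop_zero.comp hsqrttop
      simpa using this.const_mul (σ 0)
  have hlam0 : Tendsto lam atTop (𝓝 0) := (tendsto_add_atTop_iff_nat 1).mp hlam1
  have hβratio : Tendsto (fun n => β (n + 1) / β n) atTop (𝓝 1) := by
    have h : Tendsto (fun n => 1 + γ * lam (n + 1)) atTop (𝓝 1) := by
      have := (hlam1.const_mul γ).const_add 1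
      simpa using this
    apply h.congr
    intro n
    rw [hβrec n, mul_div_cancel_left₀ _ (hβpos n).ne']
  refine ⟨hlam0, hβratio, ?_⟩
  -- σ converges to a positive limit
  have hσanti : Antitone σ := antitone_nat_of_succ_le hσmono
  have hσbdd : BddBelow (Set.range σ) := ⟨m, by rintro x ⟨n, rfl⟩; exact hσbd n⟩
  have hσlim : Tendsto σ atTop (𝓝 (⨅ n, σ n)) := tendsto_atTop_ciInf hσanti hσbdd
  set s := ⨅ n, σ n with hs
  have hspos : 0 < s := lt_of_lt_of_le hm (le_ciInf hσbd)
  have hσr : Tendsto (fun n => σ (n + 2) / σ (n + 1)) atTop (𝓝 1) := by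
    have h2 : Tendsto (fun n : ℕ => σ (n + 2)) atTop (𝓝 s) :=
      hσlim.comp (tendsto_add_atTop_nat 2)
    have h1 : Tendsto (fun n : ℕ => σ (n + 1)) atTop (𝓝 s) :=
      hσlim.comp (tendsto_add_atTop_nat 1)
    have := h2.div h1 hspos.ne'
    rw [div_self hspos.ne'] at this
    exact this
  have hβinv : Tendsto (fun n => (β (n + 1) / β n)⁻¹) atTop (𝓝 1) := by
    have := hβratio.inv₀ one_ne_zero
    simpa using this
  have hsq : Tendsto (fun n => Real.sqrt ((β (n + 1) / β n)⁻¹)) atTop (𝓝 1) := by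
    have := (Real.continuous_sqrt.tendsto 1).comp hβinv
    rw [Real.sqrt_one] at this
    exact this
  have hprod : Tendsto (fun n => σ (n + 2) / σ (n + 1) * Real.sqrt ((β (n + 1) / β n)⁻¹))
      atTop (𝓝 1) := by
    have := hσr.mul hsq
    simpa using this
  have key : Tendsto (fun n => lam (n + 2) / lam (n + 1)) atTop (𝓝 1) := by
    apply hprod.congr
    intro n
    rw [hlam (n + 1), hlam n, inv_div, Real.sqrt_div (hβpos n).le]
    have h1 := (hsqrtpos n).ne'
    have h2 := (hsqrtpos (n + 1)).ne'
    have h3 := (hσpos (n + 1)).ne'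
    field_simp
  exact (tendsto_add_atTop_iff_nat 1).mp key
end
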